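/- arXiv:1905.01759 — 2 statements merged into one kernel-verified Lean document; each statement's English description precedes it below -/
import Mathlib

section
/- Let r > 0, p ≥ 1 be real numbers, and let A, B, C ≥ 0 be real numbers satisfying B ≤ (r²/6)A and C ≤ (r²/6)B. Then (p(p−1)r²/4)·A − (p² − p − 1)·B + ((p−1)(p−2)/r²)·C ≥ ((2p² − 3p + 4)/(2r²))·C. -/
/-!
Multiplying by `r²`, the claim becomes `p(p-1)/4 · X - (p²-p-1) · Y - 3p/2 · Z ≥ 0` for
`X = r⁴A`, `Y = r²B`, `Z = C`, where the two Poincaré inequalities read `6Y ≤ X` and `6Z ≤ Y`.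
Using `6Y ≤ X` (the coefficient `p(p-1)/4` is nonnegative) and then `6Z ≤ Y` (the new
coefficient `p²/2 - p/2 + 1` is positive) leaves `3(p² - 3p/2 + 2) · Z`, and this quadratic in
`p` has no real root.
-/

lemma willmore_form_nonneg_of_poincare {p X Y Z : ℝ} (hp : 1 ≤ p) (hZ : 0 ≤ Z)
    (hYX : 6 * Y ≤ X) (hZY : 6 * Z ≤ Y) :
    0 ≤ p * (p - 1) / 4 * X - (p ^ 2 - p - 1) * Y - 3 * p / 2 * Z := by
  have hcoeff : 0 ≤ p * (p - 1) / 4 := by nlinarith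
  calc (0 : ℝ) ≤ 3 * (p ^ 2 - 3 * p / 2 + 2) * Z := by nlinarith [sq_nonneg (p - 3 / 4)]
    _ ≤ (p ^ 2 / 2 - p / 2 + 1) * Y - 3 * p / 2 * Z := by nlinarith [sq_nonneg (p - 1 / 2)]
    _ ≤ p * (p - 1) / 4 * X - (p ^ 2 - p - 1) * Y - 3 * p / 2 * Z := by nlinarith

theorem stmt_6_general (r p A B C : ℝ) (hr : 0 < r) (hp : 1 ≤ p)
    (hC : 0 ≤ C)
    (hBA : B ≤ r ^ 2 / 6 * A) (hCB : C ≤ r ^ 2 / 6 * B) :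
    (p * (p - 1) * r ^ 2 / 4) * A - (p ^ 2 - p - 1) * B
      + ((p - 1) * (p - 2) / r ^ 2) * C ≥ ((2 * p ^ 2 - 3 * p + 4) / (2 * r ^ 2)) * C := by
  have hr2 : 0 < r ^ 2 := by positivity
  have hYX : 6 * (r ^ 2 * B) ≤ r ^ 4 * A := by nlinarith
  have hZY : 6 * C ≤ r ^ 2 * B := by linarith
  have hscaled : (p * (p - 1) * r ^ 2 / 4) * A - (p ^ 2 - p - 1) * B
      + ((p - 1) * (p - 2) / r ^ 2) * C - ((2 * p ^ 2 - 3 * p + 4) / (2 * r ^ 2)) * C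
      = (p * (p - 1) / 4 * (r ^ 4 * A) - (p ^ 2 - p - 1) * (r ^ 2 * B) - 3 * p / 2 * C) / r ^ 2 := by
    field_simp
    ring
  rw [ge_iff_le, ← sub_nonneg, hscaled]
  exact div_nonneg (willmore_form_nonneg_of_poincare hp hC hYX hZY) hr2.le

/-- Coercivity estimate for the p-Willmore index form on the round sphere. -/
theorem stmt_6 (r p A B C : ℝ) (hr : 0 < r) (hp : 1 ≤ p)
    (hA : 0 ≤ A) (hB : 0 ≤ B) (hC : 0 ≤ C)
    (hBA : B ≤ r ^ 2 / 6 * A) (hCB : C ≤ r ^ 2 / 6 * B) :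
    (p * (p - 1) * r ^ 2 / 4) * A - (p ^ 2 - p - 1) * B
      + ((p - 1) * (p - 2) / r ^ 2) * C ≥ ((2 * p ^ 2 - 3 * p + 4) / (2 * r ^ 2)) * C :=
  stmt_6_general r p A B C hr hp hC hBA hCB
end

section
/- Let p ≥ 1, r > 0, and let f(A,B,C) = (p(p−1)r²/4)A − (p²−p−1)B + ((p−1)(p−2)/r²)C. If A ≥ (6/r²)B ≥ 0 and B ≥ (6/r²)C ≥ 0, then f(A,B,C) ≥ 0, with f(A,B,C) = 0 only if C = 0 or p satisfies 2p² − 3p + 4 = 0 (which has no real roots); hence f(A,B,C) > 0 whenever C > 0. -/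
/-!
Feeding the Poincaré inequality `A ≥ (6/r²) B` into the nonnegative coefficient of `A`, and then
`B ≥ (6/r²) C` into the resulting coefficient `(p² − p + 2)/2 > 0` of `B`, leaves
`f(A,B,C) ≥ 2 (2p² − 3p + 4) C / r²`. The quadratic `2p² − 3p + 4` has negative discriminant,
so this lower bound is nonnegative and vanishes only when `C = 0`.
-/

/-- The second variation of `∫ H^p` at the sphere `S²(r)`, in terms of
`A = ∫ (Δu)²`, `B = ∫ |∇u|²`, `C = ∫ u²`. -/
noncomputable def willmoreIndexForm (p r A B C : ℝ) : ℝ :=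
  (p * (p - 1) * r ^ 2 / 4) * A - (p ^ 2 - p - 1) * B + ((p - 1) * (p - 2) / r ^ 2) * C

lemma two_mul_sq_sub_three_mul_add_four_pos (q : ℝ) : 0 < 2 * q ^ 2 - 3 * q + 4 := by
  nlinarith [sq_nonneg (4 * q - 3)]

lemma sq_sub_self_add_two_pos (q : ℝ) : 0 < q ^ 2 - q + 2 := by
  nlinarith [sq_nonneg (2 * q - 1)]

lemma le_willmoreIndexForm {p r A B C : ℝ} (hp : 0 ≤ p * (p - 1)) (hr : r ≠ 0)
    (hAB : A ≥ 6 / r ^ 2 * B) (hBC : B ≥ 6 / r ^ 2 * C) :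
    2 * (2 * p ^ 2 - 3 * p + 4) * C / r ^ 2 ≤ willmoreIndexForm p r A B C := by
  have hB_coeff : 0 ≤ (p ^ 2 - p + 2) / 2 := by linarith [sq_sub_self_add_two_pos p]
  calc 2 * (2 * p ^ 2 - 3 * p + 4) * C / r ^ 2
      = (p ^ 2 - p + 2) / 2 * (6 / r ^ 2 * C) + (p - 1) * (p - 2) / r ^ 2 * C := by
        field_simp; ring
    _ ≤ (p ^ 2 - p + 2) / 2 * B + (p - 1) * (p - 2) / r ^ 2 * C := by gcongr
    _ = p * (p - 1) * r ^ 2 / 4 * (6 / r ^ 2 * B) - (p ^ 2 - p - 1) * B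
          + (p - 1) * (p - 2) / r ^ 2 * C := by
        field_simp; ring
    _ ≤ willmoreIndexForm p r A B C := by unfold willmoreIndexForm; gcongr

theorem stmt_18_general (p r A B C : ℝ) (hp : 1 ≤ p) (hr : 0 < r)
    (hAB : A ≥ 6 / r ^ 2 * B)
    (hBC : B ≥ 6 / r ^ 2 * C) (hC0 : 0 ≤ 6 / r ^ 2 * C) :
    0 ≤ (p * (p - 1) * r ^ 2 / 4) * A - (p ^ 2 - p - 1) * B
        + ((p - 1) * (p - 2) / r ^ 2) * C ∧
      ((p * (p - 1) * r ^ 2 / 4) * A - (p ^ 2 - p - 1) * B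
          + ((p - 1) * (p - 2) / r ^ 2) * C = 0 →
        C = 0 ∨ 2 * p ^ 2 - 3 * p + 4 = 0) ∧
      (¬ ∃ q : ℝ, 2 * q ^ 2 - 3 * q + 4 = 0) ∧
      (0 < C → 0 < (p * (p - 1) * r ^ 2 / 4) * A - (p ^ 2 - p - 1) * B
        + ((p - 1) * (p - 2) / r ^ 2) * C) := by
  have hC : 0 ≤ C := nonneg_of_mul_nonneg_right hC0 (by positivity)
  have hq := two_mul_sq_sub_three_mul_add_four_pos p
  have bound : 2 * (2 * p ^ 2 - 3 * p + 4) * C / r ^ 2 ≤ willmoreIndexForm p r A B C :=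
    le_willmoreIndexForm (mul_nonneg (by linarith) (by linarith)) hr.ne' hAB hBC
  have hpos : 0 < C → 0 < willmoreIndexForm p r A B C := fun hCpos =>
    lt_of_lt_of_le (by positivity) bound
  exact ⟨le_trans (by positivity) bound,
    fun hzero => .inl (le_antisymm (not_lt.1 fun hCpos => (hpos hCpos).ne' hzero) hC),
    fun ⟨q, hroot⟩ => (two_mul_sq_sub_three_mul_add_four_pos q).ne' hroot, hpos⟩

/-- Strict positivity of the p-Willmore index form on the sphere: if
`A ≥ (6/r²)B ≥ 0` and `B ≥ (6/r²)C ≥ 0` then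
`f(A,B,C) = (p(p−1)r²/4)A − (p²−p−1)B + ((p−1)(p−2)/r²)C ≥ 0`, it can vanish
only if `C = 0` or `2p² − 3p + 4 = 0` (which has no real roots), and hence
`f(A,B,C) > 0` whenever `C > 0`. -/
theorem stmt_18 (p r A B C : ℝ) (hp : 1 ≤ p) (hr : 0 < r)
    (hAB : A ≥ 6 / r ^ 2 * B) (hB0 : 0 ≤ 6 / r ^ 2 * B)
    (hBC : B ≥ 6 / r ^ 2 * C) (hC0 : 0 ≤ 6 / r ^ 2 * C) :
    0 ≤ (p * (p - 1) * r ^ 2 / 4) * A - (p ^ 2 - p - 1) * B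
        + ((p - 1) * (p - 2) / r ^ 2) * C ∧
      ((p * (p - 1) * r ^ 2 / 4) * A - (p ^ 2 - p - 1) * B
          + ((p - 1) * (p - 2) / r ^ 2) * C = 0 →
        C = 0 ∨ 2 * p ^ 2 - 3 * p + 4 = 0) ∧
      (¬ ∃ q : ℝ, 2 * q ^ 2 - 3 * q + 4 = 0) ∧
      (0 < C → 0 < (p * (p - 1) * r ^ 2 / 4) * A - (p ^ 2 - p - 1) * B
        + ((p - 1) * (p - 2) / r ^ 2) * C) :=
  stmt_18_general p r A B C hp hr hAB hBC hC0
end
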